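/- arXiv:2409.00276 — 3 statements merged into one kernel-verified Lean document; each statement's English description precedes it below -/
import Mathlib

section
/- For matrices B ∈ ℝ^{m×N} and C ∈ ℝ^{m×n}, the following are equivalent: (i) there exists G ∈ ℝ^{n×N} whose every column G_{:,t} satisfies ‖G_{:,t}‖₂ ≤ 1 and such that B Gᵀ + C = 0_{m×n}; (ii) for every Z ∈ ℝ^{m×n}, ⟨C, Z⟩ ≤ ‖Zᵀ B‖_{2,1}. -/
/-!
Let `K = {B Gᵀ : every column of G has Euclidean norm ≤ 1}`. Because the column ball is symmetric,
(i) says exactly that `C ∈ K`. Since `⟨B Gᵀ, Z⟩ = ⟨G, Zᵀ B⟩`, Cauchy–Schwarz applied column by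
column, with equality at the normalised columns of `Zᵀ B`, shows that the support function
`Z ↦ max_{X ∈ K} ⟨X, Z⟩` of `K` is `‖Zᵀ B‖_{2,1}`. So (ii) says that `C` lies in every closed
half-space containing `K`, and as `K` is the linear image of a compact convex set, Hahn–Banach
separation gives `C ∈ K`.
-/

open Matrix
open scoped BigOperators Classical

/-- Euclidean norm of a vector in `ℝ^k`. -/
noncomputable def e2norm {k : ℕ} (v : Fin k → ℝ) : ℝ := Real.sqrt (∑ i, (v i) ^ 2)

open Set

section Frobenius

variable {ι κ τ : Type*} [Fintype ι] [Fintype κ]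

def frobeniusInner (X Y : Matrix ι κ ℝ) : ℝ := ∑ i, ∑ j, X i j * Y i j

theorem frobeniusInner_mul_transpose [Fintype τ] (B : Matrix ι τ ℝ) (G : Matrix κ τ ℝ)
    (Z : Matrix ι κ ℝ) : frobeniusInner (B * Gᵀ) Z = frobeniusInner G (Zᵀ * B) := by
  simp only [frobeniusInner, mul_apply, transpose_apply, Finset.sum_mul, Finset.mul_sum]
  rw [Finset.sum_comm]
  refine Finset.sum_congr rfl fun j _ => ?_
  rw [Finset.sum_comm]
  exact Finset.sum_congr rfl fun t _ => Finset.sum_congr rfl fun i _ => by ring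

theorem exists_frobeniusInner_eq (f : Matrix ι κ ℝ →ₗ[ℝ] ℝ) :
    ∃ Z : Matrix ι κ ℝ, ∀ X, f X = frobeniusInner X Z := by
  refine ⟨of fun i j => f (single i j 1), fun X => ?_⟩
  conv_lhs => rw [matrix_eq_sum_single X]
  simp only [map_sum, frobeniusInner, of_apply]
  refine Finset.sum_congr rfl fun i _ => Finset.sum_congr rfl fun j _ => ?_
  rw [← smul_eq_mul, ← map_smul, smul_single, smul_eq_mul, mul_one]

instance : LocallyConvexSpace ℝ (Matrix ι κ ℝ) :=
  inferInstanceAs (LocallyConvexSpace ℝ (ι → κ → ℝ))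

theorem mem_of_forall_frobeniusInner_le {K : Set (Matrix ι κ ℝ)} (hconv : Convex ℝ K)
    (hclosed : IsClosed K) {C : Matrix ι κ ℝ}
    (h : ∀ Z, ∃ X ∈ K, frobeniusInner C Z ≤ frobeniusInner X Z) : C ∈ K := by
  rw [← iInter_halfSpaces_eq hconv hclosed]
  refine mem_iInter.2 fun f => ?_
  obtain ⟨Z, hZ⟩ := exists_frobeniusInner_eq (f : Matrix ι κ ℝ →ₗ[ℝ] ℝ)
  simp only [ContinuousLinearMap.coe_coe] at hZ
  obtain ⟨X, hX, hle⟩ := h Z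
  exact ⟨X, hX, by rwa [hZ, hZ]⟩

end Frobenius

section ColumnBall

variable {k n N : ℕ}

theorem e2norm_eq_norm (v : Fin k → ℝ) : e2norm v = ‖WithLp.toLp 2 v‖ := by
  simp [EuclideanSpace.norm_eq, e2norm]

theorem abs_le_e2norm (v : Fin k → ℝ) (i : Fin k) : |v i| ≤ e2norm v := by
  simpa [e2norm_eq_norm] using PiLp.norm_apply_le (WithLp.toLp 2 v) i

theorem sum_mul_eq_inner (g w : Fin k → ℝ) :
    ∑ i, g i * w i = inner ℝ (WithLp.toLp 2 g) (WithLp.toLp 2 w) := by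
  simp [EuclideanSpace.inner_toLp_toLp, dotProduct, mul_comm]

theorem exists_norm_le_one_inner_eq_norm {E : Type*} [NormedAddCommGroup E]
    [InnerProductSpace ℝ E] (w : E) : ∃ g : E, ‖g‖ ≤ 1 ∧ inner ℝ g w = ‖w‖ := by
  refine ⟨‖w‖⁻¹ • w, ?_, ?_⟩
  · rw [norm_smul, norm_inv, norm_norm]
    exact inv_mul_le_one_of_le₀ le_rfl (norm_nonneg w)
  · rw [real_inner_smul_left, real_inner_self_eq_norm_sq]
    rcases eq_or_ne ‖w‖ 0 with hw | hw
    · simp [hw]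
    · field_simp

theorem sum_mul_le_e2norm {g : Fin k → ℝ} (hg : e2norm g ≤ 1) (w : Fin k → ℝ) :
    ∑ i, g i * w i ≤ e2norm w := by
  rw [e2norm_eq_norm] at hg ⊢
  rw [sum_mul_eq_inner]
  calc _ ≤ ‖WithLp.toLp 2 g‖ * ‖WithLp.toLp 2 w‖ := real_inner_le_norm _ _
    _ ≤ ‖WithLp.toLp 2 w‖ := mul_le_of_le_one_left (norm_nonneg _) hg

theorem exists_e2norm_le_one_sum_mul_eq (w : Fin k → ℝ) :
    ∃ g : Fin k → ℝ, e2norm g ≤ 1 ∧ ∑ i, g i * w i = e2norm w := by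
  obtain ⟨g, hg, hgw⟩ :=
    exists_norm_le_one_inner_eq_norm (WithLp.toLp 2 w : EuclideanSpace ℝ (Fin k))
  exact ⟨g.ofLp, by rwa [e2norm_eq_norm], by rwa [sum_mul_eq_inner, e2norm_eq_norm]⟩

def columnBall (n N : ℕ) : Set (Matrix (Fin n) (Fin N) ℝ) :=
  {G | ∀ t, e2norm (fun i => G i t) ≤ 1}

noncomputable def l21Norm (W : Matrix (Fin n) (Fin N) ℝ) : ℝ := ∑ t, e2norm fun i => W i t

theorem neg_mem_columnBall {G : Matrix (Fin n) (Fin N) ℝ} (hG : G ∈ columnBall n N) :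
    -G ∈ columnBall n N := fun t => by
  simpa only [e2norm, Matrix.neg_apply, neg_sq] using hG t

theorem convex_columnBall : Convex ℝ (columnBall n N) := by
  intro G hG G' hG' a b ha hb hab t
  have hcol : WithLp.toLp 2 (fun i => (a • G + b • G') i t)
      = a • WithLp.toLp 2 (fun i => G i t) + b • WithLp.toLp 2 (fun i => G' i t) := rfl
  have hball := convex_closedBall (0 : EuclideanSpace ℝ (Fin n)) 1
    (mem_closedBall_zero_iff.2 ((e2norm_eq_norm _).symm.trans_le (hG t)))
    (mem_closedBall_zero_iff.2 ((e2norm_eq_norm _).symm.trans_le (hG' t))) ha hb hab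
  rwa [e2norm_eq_norm, hcol, ← mem_closedBall_zero_iff]

theorem isCompact_columnBall : IsCompact (columnBall n N) := by
  have hbox : columnBall n N ⊆ univ.pi fun _ => univ.pi fun _ => Icc (-1 : ℝ) 1 :=
    fun G hG j _ t _ => abs_le.1 <| (abs_le_e2norm _ j).trans (hG t)
  refine (isCompact_univ_pi fun _ => isCompact_univ_pi fun _ => isCompact_Icc).of_isClosed_subset
    ?_ hbox
  simp only [columnBall, ofPred_forall]
  exact isClosed_iInter fun t => isClosed_le (by unfold e2norm; fun_prop) continuous_const

theorem isGreatest_frobeniusInner_columnBall (W : Matrix (Fin n) (Fin N) ℝ) :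
    IsGreatest ((frobeniusInner · W) '' columnBall n N) (l21Norm W) := by
  have hcols : ∀ G : Matrix (Fin n) (Fin N) ℝ,
      frobeniusInner G W = ∑ t, ∑ i, G i t * W i t := fun G => Finset.sum_comm
  constructor
  · choose g hg hgW using fun t => exists_e2norm_le_one_sum_mul_eq fun i => W i t
    exact ⟨of fun i t => g t i, hg, by simp only [hcols, of_apply, hgW, l21Norm]⟩
  · rintro _ ⟨G, hG, rfl⟩
    exact (hcols G).trans_le <| Finset.sum_le_sum fun t _ => sum_mul_le_e2norm (hG t) _

variable {m : ℕ} (B : Matrix (Fin m) (Fin N) ℝ)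

theorem mem_image_mul_transpose_columnBall_iff (C : Matrix (Fin m) (Fin n) ℝ) :
    C ∈ (fun G => B * Gᵀ) '' columnBall n N ↔ ∃ G ∈ columnBall n N, B * Gᵀ + C = 0 := by
  constructor
  · rintro ⟨G, hG, rfl⟩
    refine ⟨-G, neg_mem_columnBall hG, ?_⟩
    rw [transpose_neg, Matrix.mul_neg, neg_add_cancel]
  · rintro ⟨G, hG, hBG⟩
    refine ⟨-G, neg_mem_columnBall hG, ?_⟩
    change B * (-G)ᵀ = C
    rw [transpose_neg, Matrix.mul_neg]
    exact (eq_neg_of_add_eq_zero_right hBG).symm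

theorem convex_image_mul_transpose_columnBall :
    Convex ℝ ((fun G => B * Gᵀ) '' columnBall n N) :=
  convex_columnBall.is_linear_image
    ⟨fun G G' => by rw [transpose_add, Matrix.mul_add], fun c G => by
      rw [transpose_smul, Matrix.mul_smul]⟩

theorem isClosed_image_mul_transpose_columnBall :
    IsClosed ((fun G => B * Gᵀ) '' columnBall n N) :=
  (isCompact_columnBall.image (continuous_const.matrix_mul continuous_id.matrix_transpose)).isClosed

end ColumnBall

/-- generalized Farkas step. For `B ∈ ℝ^{m×N}` and `C ∈ ℝ^{m×n}`:
there exists `G ∈ ℝ^{n×N}` with all columns of `ℓ₂`-norm at most `1` such that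
`B Gᵀ + C = 0` iff for every `Z ∈ ℝ^{m×n}`, `⟨C, Z⟩ ≤ ‖Zᵀ B‖_{2,1}`. -/
theorem farkas_step (m n N : ℕ)
    (B : Matrix (Fin m) (Fin N) ℝ) (C : Matrix (Fin m) (Fin n) ℝ) :
    (∃ G : Matrix (Fin n) (Fin N) ℝ,
        (∀ t : Fin N, e2norm (fun i => G i t) ≤ 1) ∧ B * Gᵀ + C = 0)
      ↔
    (∀ Z : Matrix (Fin m) (Fin n) ℝ,
        (∑ i, ∑ j, C i j * Z i j) ≤ ∑ t : Fin N, e2norm (fun i => (Zᵀ * B) i t)) := by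
  refine (mem_image_mul_transpose_columnBall_iff B C).symm.trans ⟨?_, fun hC => ?_⟩
  · rintro ⟨G, hG, rfl⟩ Z
    change frobeniusInner (B * Gᵀ) Z ≤ l21Norm (Zᵀ * B)
    rw [frobeniusInner_mul_transpose]
    exact (isGreatest_frobeniusInner_columnBall _).2 ⟨G, hG, rfl⟩
  refine mem_of_forall_frobeniusInner_le (convex_image_mul_transpose_columnBall B)
    (isClosed_image_mul_transpose_columnBall B) fun Z => ?_
  obtain ⟨G, hG, hGZ⟩ := (isGreatest_frobeniusInner_columnBall (Zᵀ * B)).1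
  refine ⟨B * Gᵀ, ⟨G, hG, rfl⟩, ?_⟩
  rw [frobeniusInner_mul_transpose]
  exact (hC Z).trans_eq hGZ.symm
end

section
/- If for every matrix Z ∈ ℝ^{m×n} it holds that Σ_{t∈K} ‖Zᵀ f(x_t)‖₂ ≤ Σ_{t∈K^c} ‖Zᵀ f(x_t)‖₂, then the ground-truth matrix Ā is a global minimizer over A ∈ ℝ^{n×m} of the loss g(A) = Σ_{t=0}^{T−1} ‖(Ā − A) f(x_t) + d̄_t‖₂. -/
/-!
Write `c_t = (Ā - A) f(x_t)`. At `A = Ā` the loss is `Σ_{t ∈ K} ‖d̄_t‖`. For `t ∉ K` the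
`t`-th term of `g(A)` is `‖c_t‖`, and for `t ∈ K` the reverse triangle inequality gives
`‖c_t + d̄_t‖ ≥ ‖d̄_t‖ - ‖c_t‖`. Hence `g(A) - g(Ā) ≥ Σ_{t ∉ K} ‖c_t‖ - Σ_{t ∈ K} ‖c_t‖`, which is
nonnegative by the hypothesis applied to `Z = (Ā - A)ᵀ`.
-/

open Matrix
open scoped BigOperators Classical

lemma e2norm_eq_norm_toLp {k : ℕ} (v : Fin k → ℝ) :
    e2norm v = ‖(WithLp.toLp 2 v : EuclideanSpace ℝ (Fin k))‖ := by
  simp [e2norm, EuclideanSpace.norm_eq]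

theorem Finset.sum_norm_le_sum_norm_add {ι E : Type*} [SeminormedAddCommGroup E]
    (s : Finset ι) (p : ι → Prop) [DecidablePred p] (c d : ι → E)
    (hd : ∀ t ∈ s, p t → d t = 0)
    (hc : ∑ t ∈ s with ¬ p t, ‖c t‖ ≤ ∑ t ∈ s with p t, ‖c t‖) :
    ∑ t ∈ s, ‖d t‖ ≤ ∑ t ∈ s, ‖c t + d t‖ := by
  have hd_sum : ∑ t ∈ s with p t, ‖d t‖ = 0 :=
    Finset.sum_eq_zero fun t ht => by
      rw [Finset.mem_filter] at ht
      rw [hd t ht.1 ht.2, norm_zero]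
  have hcd_sum : ∑ t ∈ s with p t, ‖c t + d t‖ = ∑ t ∈ s with p t, ‖c t‖ :=
    Finset.sum_congr rfl fun t ht => by
      rw [Finset.mem_filter] at ht
      rw [hd t ht.1 ht.2, add_zero]
  have hreverse : ∑ t ∈ s with ¬ p t, ‖d t‖ ≤
      ∑ t ∈ s with ¬ p t, ‖c t + d t‖ + ∑ t ∈ s with ¬ p t, ‖c t‖ := by
    rw [← Finset.sum_add_distrib]
    exact Finset.sum_le_sum fun t _ => add_comm (c t) (d t) ▸ norm_le_add_norm_add (d t) (c t)
  rw [← Finset.sum_filter_not_add_sum_filter s p, ← Finset.sum_filter_not_add_sum_filter s p,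
    hd_sum, hcd_sum]
  linarith

theorem sufficient_condition_for_optimality_general
    (T n m : ℕ)
    (f : (Fin n → ℝ) → (Fin m → ℝ))
    (Abar : Matrix (Fin n) (Fin m) ℝ)
    (d : ℕ → (Fin n → ℝ)) (x : ℕ → (Fin n → ℝ))
    (hsuf : ∀ Z : Matrix (Fin m) (Fin n) ℝ,
        ∑ t ∈ (Finset.range T).filter (fun t => d t ≠ 0),
            e2norm (Zᵀ.mulVec (f (x t))) ≤
          ∑ t ∈ (Finset.range T).filter (fun t => d t = 0),
            e2norm (Zᵀ.mulVec (f (x t)))) :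
    ∀ A : Matrix (Fin n) (Fin m) ℝ,
      ∑ t ∈ Finset.range T, e2norm ((Abar - Abar).mulVec (f (x t)) + d t) ≤
        ∑ t ∈ Finset.range T, e2norm ((Abar - A).mulVec (f (x t)) + d t) := by
  intro A
  have hc := hsuf (Abar - A)ᵀ
  rw [transpose_transpose] at hc
  simp only [e2norm_eq_norm_toLp, WithLp.toLp_add, sub_self, zero_mulVec, zero_add] at hc ⊢
  exact Finset.sum_norm_le_sum_norm_add _ (fun t => d t = 0) _ _
    (fun t _ ht => by rw [ht, WithLp.toLp_zero]) hc

/-- Corollary 2.2, sufficient condition for optimality.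
If for every `Z ∈ ℝ^{m×n}`, `Σ_{t∈K} ‖Zᵀ f(x_t)‖₂ ≤ Σ_{t∈K^c} ‖Zᵀ f(x_t)‖₂`, then `Ā`
is a global minimizer of `g(A) = Σ_{t<T} ‖(Ā − A) f(x_t) + d̄_t‖₂`. -/
theorem sufficient_condition_for_optimality
    (T n m : ℕ) (hT : 0 < T) (hn : 0 < n) (hm : 0 < m)
    (f : (Fin n → ℝ) → (Fin m → ℝ))
    (Abar : Matrix (Fin n) (Fin m) ℝ)
    (d : ℕ → (Fin n → ℝ)) (x : ℕ → (Fin n → ℝ))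
    (hx0 : x 0 = 0)
    (hxstep : ∀ t < T, x (t + 1) = Abar.mulVec (f (x t)) + d t)
    (hsuf : ∀ Z : Matrix (Fin m) (Fin n) ℝ,
        ∑ t ∈ (Finset.range T).filter (fun t => d t ≠ 0),
            e2norm (Zᵀ.mulVec (f (x t))) ≤
          ∑ t ∈ (Finset.range T).filter (fun t => d t = 0),
            e2norm (Zᵀ.mulVec (f (x t)))) :
    ∀ A : Matrix (Fin n) (Fin m) ℝ,
      ∑ t ∈ Finset.range T, e2norm ((Abar - Abar).mulVec (f (x t)) + d t) ≤
        ∑ t ∈ Finset.range T, e2norm ((Abar - A).mulVec (f (x t)) + d t) :=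
  sufficient_condition_for_optimality_general T n m f Abar d x hsuf
end

section
/- If for every nonzero matrix Z ∈ ℝ^{m×n} it holds that Σ_{t∈K} d̂_tᵀ Zᵀ f(x_t) < Σ_{t∈K^c} ‖Zᵀ f(x_t)‖₂ (strict inequality), then the ground-truth matrix Ā is the unique global minimizer over A ∈ ℝ^{n×m} of the loss g(A) = Σ_{t=0}^{T−1} ‖(Ā − A) f(x_t) + d̄_t‖₂. -/
open Matrix
open scoped BigOperators Classical

/-- Normalized attack direction `d̂ = d / ‖d‖₂`. -/
noncomputable def dhat {k : ℕ} (v : Fin k → ℝ) : Fin k → ℝ := (e2norm v)⁻¹ • v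

section EuclideanNorm

variable {k : ℕ}

@[simp]
lemma e2norm_zero : e2norm (0 : Fin k → ℝ) = 0 := by
  simp [e2norm]

@[simp]
lemma e2norm_neg (v : Fin k → ℝ) : e2norm (-v) = e2norm v := by
  simp [e2norm]

lemma dotProduct_le_e2norm_mul_e2norm (u v : Fin k → ℝ) : u ⬝ᵥ v ≤ e2norm u * e2norm v :=
  Real.sum_mul_le_sqrt_mul_sqrt _ u v

lemma dotProduct_self_eq_e2norm_sq (v : Fin k → ℝ) : v ⬝ᵥ v = e2norm v ^ 2 := by
  rw [e2norm, Real.sq_sqrt (Finset.sum_nonneg fun i _ => sq_nonneg (v i))]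
  simp only [dotProduct, sq]

lemma dhat_dotProduct_self (d : Fin k → ℝ) : dhat d ⬝ᵥ d = e2norm d := by
  rw [dhat, smul_dotProduct, dotProduct_self_eq_e2norm_sq, smul_eq_mul]
  rcases eq_or_ne (e2norm d) 0 with h | h
  · simp [h]
  · field_simp

lemma dhat_dotProduct_le_e2norm (d v : Fin k → ℝ) : dhat d ⬝ᵥ v ≤ e2norm v := by
  have hv : 0 ≤ e2norm v := Real.sqrt_nonneg _
  rw [dhat, smul_dotProduct, smul_eq_mul]
  rcases eq_or_ne (e2norm d) 0 with h | h
  · simpa [h] using hv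
  · calc (e2norm d)⁻¹ * (d ⬝ᵥ v) ≤ (e2norm d)⁻¹ * (e2norm d * e2norm v) := by
          gcongr
          · exact inv_nonneg.mpr (Real.sqrt_nonneg _)
          · exact dotProduct_le_e2norm_mul_e2norm d v
      _ = e2norm v := by field_simp

lemma e2norm_sub_dhat_dotProduct_le (d u : Fin k → ℝ) :
    e2norm d - dhat d ⬝ᵥ u ≤ e2norm (d - u) := by
  simpa only [dotProduct_sub, dhat_dotProduct_self] using dhat_dotProduct_le_e2norm d (d - u)

end EuclideanNorm

lemma sum_e2norm_lt_sum_e2norm_sub {ι : Type*} {k : ℕ} (s : Finset ι) (d u : ι → Fin k → ℝ)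
    (h : ∑ t ∈ s.filter (fun t => d t ≠ 0), dhat (d t) ⬝ᵥ u t <
      ∑ t ∈ s.filter (fun t => d t = 0), e2norm (u t)) :
    ∑ t ∈ s, e2norm (d t) < ∑ t ∈ s, e2norm (d t - u t) := by
  have hK : ∑ t ∈ s.filter (fun t => d t ≠ 0), (e2norm (d t) - dhat (d t) ⬝ᵥ u t) ≤
      ∑ t ∈ s.filter (fun t => d t ≠ 0), e2norm (d t - u t) :=
    Finset.sum_le_sum fun t _ => e2norm_sub_dhat_dotProduct_le (d t) (u t)
  have hKc : ∑ t ∈ s.filter (fun t => d t = 0), e2norm (u t) =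
      ∑ t ∈ s.filter (fun t => ¬d t ≠ 0), e2norm (d t - u t) := by
    simp only [not_not]
    refine Finset.sum_congr rfl fun t ht => ?_
    rw [(Finset.mem_filter.mp ht).2, zero_sub, e2norm_neg]
  calc ∑ t ∈ s, e2norm (d t)
      = ∑ t ∈ s.filter (fun t => d t ≠ 0), e2norm (d t) :=
        (Finset.sum_filter_of_ne (p := fun t => d t ≠ 0)
          fun t _ hne h0 => hne (by rw [h0, e2norm_zero])).symm
    _ < ∑ t ∈ s.filter (fun t => d t ≠ 0), (e2norm (d t) - dhat (d t) ⬝ᵥ u t) +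
          ∑ t ∈ s.filter (fun t => d t = 0), e2norm (u t) := by
        rw [Finset.sum_sub_distrib]
        linarith
    _ ≤ ∑ t ∈ s.filter (fun t => d t ≠ 0), e2norm (d t - u t) +
          ∑ t ∈ s.filter (fun t => ¬d t ≠ 0), e2norm (d t - u t) :=
        add_le_add hK hKc.le
    _ = ∑ t ∈ s, e2norm (d t - u t) := Finset.sum_filter_add_sum_filter_not _ _ _

theorem sufficient_condition_for_uniqueness_general
    (T n m : ℕ)
    (f : (Fin n → ℝ) → (Fin m → ℝ))
    (Abar : Matrix (Fin n) (Fin m) ℝ)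
    (d : ℕ → (Fin n → ℝ)) (x : ℕ → (Fin n → ℝ))
    (hstrict : ∀ Z : Matrix (Fin m) (Fin n) ℝ, Z ≠ 0 →
        ∑ t ∈ (Finset.range T).filter (fun t => d t ≠ 0),
            dhat (d t) ⬝ᵥ Zᵀ.mulVec (f (x t)) <
          ∑ t ∈ (Finset.range T).filter (fun t => d t = 0),
            e2norm (Zᵀ.mulVec (f (x t)))) :
    ∀ A : Matrix (Fin n) (Fin m) ℝ, A ≠ Abar →
      ∑ t ∈ Finset.range T, e2norm ((Abar - Abar).mulVec (f (x t)) + d t) <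
        ∑ t ∈ Finset.range T, e2norm ((Abar - A).mulVec (f (x t)) + d t) := by
  intro A hA
  have hZ : (A - Abar)ᵀ ≠ 0 := by
    rwa [Ne, transpose_eq_zero, sub_eq_zero]
  have hlt := sum_e2norm_lt_sum_e2norm_sub (Finset.range T) d
    (fun t => (A - Abar).mulVec (f (x t))) (by simpa only [transpose_transpose] using hstrict _ hZ)
  have hres : ∀ t, (Abar - A).mulVec (f (x t)) + d t = d t - (A - Abar).mulVec (f (x t)) := by
    intro t
    rw [← neg_sub A Abar, neg_mulVec, neg_add_eq_sub]
  simpa only [sub_self, zero_mulVec, zero_add, hres] using hlt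

/-- Corollary 3.2, sufficient condition for uniqueness.
If for every nonzero `Z ∈ ℝ^{m×n}`,
`Σ_{t∈K} d̂_tᵀ Zᵀ f(x_t) < Σ_{t∈K^c} ‖Zᵀ f(x_t)‖₂`, then `Ā` is the unique global
minimizer of `g(A) = Σ_{t<T} ‖(Ā − A) f(x_t) + d̄_t‖₂`. -/
theorem sufficient_condition_for_uniqueness
    (T n m : ℕ) (hT : 0 < T) (hn : 0 < n) (hm : 0 < m)
    (f : (Fin n → ℝ) → (Fin m → ℝ))
    (Abar : Matrix (Fin n) (Fin m) ℝ)
    (d : ℕ → (Fin n → ℝ)) (x : ℕ → (Fin n → ℝ))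
    (hx0 : x 0 = 0)
    (hxstep : ∀ t < T, x (t + 1) = Abar.mulVec (f (x t)) + d t)
    (hstrict : ∀ Z : Matrix (Fin m) (Fin n) ℝ, Z ≠ 0 →
        ∑ t ∈ (Finset.range T).filter (fun t => d t ≠ 0),
            dhat (d t) ⬝ᵥ Zᵀ.mulVec (f (x t)) <
          ∑ t ∈ (Finset.range T).filter (fun t => d t = 0),
            e2norm (Zᵀ.mulVec (f (x t)))) :
    ∀ A : Matrix (Fin n) (Fin m) ℝ, A ≠ Abar →
      ∑ t ∈ Finset.range T, e2norm ((Abar - Abar).mulVec (f (x t)) + d t) <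
        ∑ t ∈ Finset.range T, e2norm ((Abar - A).mulVec (f (x t)) + d t) :=
  sufficient_condition_for_uniqueness_general T n m f Abar d x hstrict
end
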